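/- arXiv:0906.4236 — 2 statements merged into one kernel-verified Lean document; each statement's English description precedes it below -/
import Mathlib

section
/- Let m+n be even, let A be a skew-symmetric matrix indexed by the ordered set V = (v₁,...,v_{m+n}), partitioned into disjoint subsets A₀ = (v_{i₁},...,v_{i_m}) and B = (v_{j₁},...,v_{j_n}) with m < n. Then Pf(V) = −∑_{X ⊊ B} (−1)^{Σ(B\X, V)} · Pf(A₀ ∪ X) · Pf(B \ X), the sum running over all proper subsets X of B. -/
open Finset

/-- An (ordered) matching on `Fin n`: a set of arcs `(i,j)` with `i < j`,
pairwise vertex-disjoint. -/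
def IsMatching {n : ℕ} (μ : Finset (Fin n × Fin n)) : Prop :=
  (∀ p ∈ μ, p.1 < p.2) ∧
    ∀ p ∈ μ, ∀ q ∈ μ, p ≠ q → ({p.1, p.2} ∩ {q.1, q.2} : Finset (Fin n)) = ∅

/-- The set of vertices covered by a matching. -/
def cover {n : ℕ} (μ : Finset (Fin n × Fin n)) : Finset (Fin n) :=
  μ.biUnion fun p => {p.1, p.2}

/-- The number of crossings of a matching: pairs of arcs `{a,c}`, `{b,d}` with
`a < b < c < d`. -/
def crossings {n : ℕ} (μ : Finset (Fin n × Fin n)) : ℕ :=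
  ((μ ×ˢ μ).filter fun pq => pq.1.1 < pq.2.1 ∧ pq.2.1 < pq.1.2 ∧ pq.1.2 < pq.2.2).card

open scoped Classical in
/-- The Pfaffian of the principal submatrix of a skew-symmetric matrix `A`
indexed by the subset `S` (with the inherited order), defined as the signed sum
over perfect matchings of `S`.  `mpf A ∅ = 1` and `mpf A S = 0` for `|S|` odd. -/
noncomputable def mpf {n : ℕ} {R : Type*} [CommRing R]
    (A : Matrix (Fin n) (Fin n) R) (S : Finset (Fin n)) : R :=
  ∑ μ ∈ Finset.univ.filter
      (fun μ : Finset (Fin n × Fin n) => IsMatching μ ∧ cover μ = S),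
    (-1 : R) ^ crossings μ * ∏ p ∈ μ, A p.1 p.2

/-- Symmetric difference of finite sets. -/
def sd {n : ℕ} (X Y : Finset (Fin n)) : Finset (Fin n) := (X ∪ Y) \ (X ∩ Y)

/-- `posSum M Y = Σ(Y,M)`: the sum over `y ∈ Y` of the (1-based) position of `y`
in the increasing enumeration of `M`. -/
def posSum {n : ℕ} (M Y : Finset (Fin n)) : ℕ :=
  ∑ y ∈ Y, (M.filter fun z => z ≤ y).card

/-!
Expand both Pfaffians into matchings. Including the term `X = B`, which is `Pf(V)`, the sum
becomes a sum over perfect matchings `μ` of `V` and sets `T` of arcs of `μ` lying inside `B`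
(`T` is the matching of `B \ X`). Moving one more arc `e` of `μ` into `T` flips the sign:
the position sum grows by `e.1 + e.2 + 2`, and the crossing numbers change by the number of
arcs crossing `e`, which has the parity of the number `e.2 - e.1 - 1` of vertices strictly
inside `e`. As `|A₀| < |B|`, every perfect matching has an arc inside `B`, so the sum over
`T` vanishes.
-/

section

variable {N : ℕ} {R : Type*} [CommRing R]

lemma pair_subset_cover {μ : Finset (Fin N × Fin N)} {p : Fin N × Fin N} (hp : p ∈ μ) :
    ({p.1, p.2} : Finset (Fin N)) ⊆ cover μ :=
  subset_biUnion_of_mem (fun p : Fin N × Fin N => ({p.1, p.2} : Finset (Fin N))) hp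

lemma cover_union (μ ν : Finset (Fin N × Fin N)) : cover (μ ∪ ν) = cover μ ∪ cover ν :=
  union_biUnion

lemma cover_insert (e : Fin N × Fin N) (μ : Finset (Fin N × Fin N)) :
    cover (insert e μ) = {e.1, e.2} ∪ cover μ :=
  biUnion_insert

lemma eq_empty_of_cover_eq_empty {μ : Finset (Fin N × Fin N)} (h : cover μ = ∅) : μ = ∅ :=
  eq_empty_of_forall_notMem fun _ hp => by
    simpa [h] using pair_subset_cover hp (mem_insert_self _ _)

lemma disjoint_of_disjoint_cover {μ ν : Finset (Fin N × Fin N)}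
    (h : Disjoint (cover μ) (cover ν)) : Disjoint μ ν :=
  disjoint_left.2 fun _ hμ hν =>
    disjoint_left.1 h (pair_subset_cover hμ (mem_insert_self _ _))
      (pair_subset_cover hν (mem_insert_self _ _))

lemma IsMatching.mono {μ ν : Finset (Fin N × Fin N)} (h : ν ⊆ μ) (hμ : IsMatching μ) :
    IsMatching ν :=
  ⟨fun p hp => hμ.1 p (h hp), fun p hp q hq => hμ.2 p (h hp) q (h hq)⟩

lemma IsMatching.disjoint_pair {μ : Finset (Fin N × Fin N)} (hμ : IsMatching μ)
    {p q : Fin N × Fin N} (hp : p ∈ μ) (hq : q ∈ μ) (hpq : p ≠ q) :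
    Disjoint ({p.1, p.2} : Finset (Fin N)) {q.1, q.2} :=
  disjoint_iff_inter_eq_empty.2 (hμ.2 p hp q hq hpq)

lemma IsMatching.disjoint_cover {μ ν ν' : Finset (Fin N × Fin N)} (hμ : IsMatching μ)
    (hν : ν ⊆ μ) (hν' : ν' ⊆ μ) (h : Disjoint ν ν') : Disjoint (cover ν) (cover ν') := by
  rw [cover, cover, disjoint_biUnion_left]
  simp only [disjoint_biUnion_right]
  intro p hp q hq
  exact hμ.disjoint_pair (hν hp) (hν' hq) fun hpq => disjoint_left.1 h hp (hpq ▸ hq)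

lemma IsMatching.union {μ ν : Finset (Fin N × Fin N)} (hμ : IsMatching μ) (hν : IsMatching ν)
    (h : Disjoint (cover μ) (cover ν)) : IsMatching (μ ∪ ν) := by
  refine ⟨fun p hp => (mem_union.1 hp).elim (hμ.1 p) (hν.1 p), fun p hp q hq hpq => ?_⟩
  rcases mem_union.1 hp with hp | hp <;> rcases mem_union.1 hq with hq | hq
  · exact hμ.2 p hp q hq hpq
  · exact disjoint_iff_inter_eq_empty.1 (h.mono (pair_subset_cover hp) (pair_subset_cover hq))
  · exact disjoint_iff_inter_eq_empty.1
      (h.symm.mono (pair_subset_cover hp) (pair_subset_cover hq))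
  · exact hν.2 p hp q hq hpq

lemma IsMatching.card_eq_sum_card_inter {μ : Finset (Fin N × Fin N)} (hμ : IsMatching μ)
    {S : Finset (Fin N)} (hS : S ⊆ cover μ) :
    #S = ∑ q ∈ μ, #(({q.1, q.2} : Finset (Fin N)) ∩ S) := by
  rw [← card_biUnion, ← biUnion_inter, ← cover, inter_eq_right.2 hS]
  exact fun p hp q hq hpq =>
    (hμ.disjoint_pair hp hq hpq).mono inter_subset_left inter_subset_left

def crossingsWith (e : Fin N × Fin N) (ν : Finset (Fin N × Fin N)) : ℕ :=
  #{q ∈ ν | (e.1 < q.1 ∧ q.1 < e.2 ∧ e.2 < q.2) ∨ (q.1 < e.1 ∧ e.1 < q.2 ∧ q.2 < e.2)}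

lemma crossingsWith_union {e : Fin N × Fin N} {ν ν' : Finset (Fin N × Fin N)}
    (h : Disjoint ν ν') :
    crossingsWith e (ν ∪ ν') = crossingsWith e ν + crossingsWith e ν' := by
  rw [crossingsWith, filter_union, card_union_of_disjoint (disjoint_filter_filter h)]; rfl

lemma crossings_insert {e : Fin N × Fin N} {ν : Finset (Fin N × Fin N)} (he : e ∉ ν) :
    crossings (insert e ν) = crossings ν + crossingsWith e ν := by
  rw [crossingsWith, filter_or,
    card_union_of_disjoint (disjoint_filter.2 fun q _ h h' => by omega)]
  simp only [crossings, card_filter, sum_product, sum_insert he, lt_irrefl, and_false, if_false,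
    zero_add, sum_add_distrib]
  ring

lemma crossingsWith_eq_sum (e : Fin N × Fin N) (ν : Finset (Fin N × Fin N)) :
    crossingsWith e ν = ∑ q ∈ ν, crossingsWith e {q} := by
  rw [crossingsWith, card_filter]
  refine sum_congr rfl fun q _ => ?_
  rw [crossingsWith, filter_singleton]
  split_ifs <;> rfl

lemma card_pair_inter_Ioo_modEq {e q : Fin N × Fin N} (hq : q.1 < q.2)
    (h : Disjoint ({q.1, q.2} : Finset (Fin N)) {e.1, e.2}) :
    #(({q.1, q.2} : Finset (Fin N)) ∩ Ioo e.1 e.2) ≡ crossingsWith e {q} [MOD 2] := by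
  simp only [disjoint_insert_left, disjoint_insert_right, disjoint_singleton, mem_insert,
    mem_singleton, not_or] at h
  rw [← filter_mem_eq_inter, card_filter, sum_pair hq.ne, crossingsWith, filter_singleton]
  simp only [mem_Ioo]
  split_ifs <;> simp [Nat.ModEq] <;> omega

-- Every vertex strictly inside `e` is an endpoint of another arc, and an arc has exactly one
-- endpoint strictly inside `e` iff it crosses `e`.
lemma IsMatching.crossingsWith_erase_modEq {μ : Finset (Fin N × Fin N)} (hμ : IsMatching μ)
    (hcov : cover μ = univ) {e : Fin N × Fin N} (he : e ∈ μ) :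
    crossingsWith e (μ.erase e) ≡ #(Ioo e.1 e.2) [MOD 2] := by
  have hsum := hμ.card_eq_sum_card_inter (S := Ioo e.1 e.2) (hcov ▸ subset_univ _)
  rw [← add_sum_erase _ _ he, (by simp : ({e.1, e.2} : Finset (Fin N)) ∩ Ioo e.1 e.2 = ∅),
    card_empty, zero_add] at hsum
  rw [hsum, crossingsWith_eq_sum]
  refine Nat.ModEq.sum fun q hq => (card_pair_inter_Ioo_modEq ?_ ?_).symm
  · exact hμ.1 q (mem_of_mem_erase hq)
  · exact hμ.disjoint_pair (mem_of_mem_erase hq) he (ne_of_mem_erase hq)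

open scoped Classical in
noncomputable def perfectMatchings (S : Finset (Fin N)) : Finset (Finset (Fin N × Fin N)) :=
  {μ | IsMatching μ ∧ cover μ = S}

lemma mem_perfectMatchings {S : Finset (Fin N)} {μ : Finset (Fin N × Fin N)} :
    μ ∈ perfectMatchings S ↔ IsMatching μ ∧ cover μ = S := by
  simp [perfectMatchings]

def matchingWeight (A : Matrix (Fin N) (Fin N) R) (μ : Finset (Fin N × Fin N)) : R :=
  (-1) ^ crossings μ * ∏ p ∈ μ, A p.1 p.2

lemma mpf_eq_sum_matchingWeight (A : Matrix (Fin N) (Fin N) R) (S : Finset (Fin N)) :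
    mpf A S = ∑ μ ∈ perfectMatchings S, matchingWeight A μ :=
  rfl

lemma mpf_empty (A : Matrix (Fin N) (Fin N) R) : mpf A ∅ = 1 := by
  have : perfectMatchings (∅ : Finset (Fin N)) = {∅} := by
    ext μ
    rw [mem_perfectMatchings, mem_singleton]
    exact ⟨fun h => eq_empty_of_cover_eq_empty h.2, fun h => h ▸ ⟨by simp [IsMatching], rfl⟩⟩
  simp [mpf_eq_sum_matchingWeight, this, matchingWeight, crossings]

lemma matchingWeight_insert (A : Matrix (Fin N) (Fin N) R) {e : Fin N × Fin N}
    {ν : Finset (Fin N × Fin N)} (he : e ∉ ν) :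
    matchingWeight A (insert e ν) =
      (-1) ^ crossingsWith e ν * A e.1 e.2 * matchingWeight A ν := by
  rw [matchingWeight, matchingWeight, crossings_insert he, prod_insert he, pow_add]
  ring

lemma posSum_univ (Y : Finset (Fin N)) : posSum univ Y = ∑ y ∈ Y, ((y : ℕ) + 1) := by
  refine sum_congr rfl fun y _ => ?_
  rw [← Fin.card_Iic]
  congr 1
  ext z
  simp

def splitWeight (A : Matrix (Fin N) (Fin N) R) (μ T : Finset (Fin N × Fin N)) : R :=
  (-1) ^ posSum univ (cover T) * (matchingWeight A (μ \ T) * matchingWeight A T)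

lemma IsMatching.splitWeight_insert (A : Matrix (Fin N) (Fin N) R)
    {μ T : Finset (Fin N × Fin N)} (hμ : IsMatching μ) (hcov : cover μ = univ) (hT : T ⊆ μ)
    {e : Fin N × Fin N} (he : e ∈ μ) (heT : e ∉ T) :
    splitWeight A μ (insert e T) = -splitWeight A μ T := by
  obtain ⟨ν, hν⟩ : ∃ ν, ν = (μ \ T).erase e := ⟨_, rfl⟩
  have heν : e ∉ ν := hν ▸ notMem_erase e _
  have hμT : μ \ T = insert e ν := hν ▸ (insert_erase (mem_sdiff.2 ⟨he, heT⟩)).symm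
  have hμeT : μ \ insert e T = ν := by rw [sdiff_insert, hν]
  have hνT : ν ∪ T = μ.erase e := by
    ext q
    by_cases hq : q ∈ T
    · simp [hν, hq, hT hq, ne_of_mem_of_not_mem hq heT]
    · simp [hν, hq]
  have hpar : crossingsWith e ν + crossingsWith e T ≡ #(Ioo e.1 e.2) [MOD 2] := by
    rw [← crossingsWith_union (hν ▸ disjoint_sdiff_self_left.mono_left (erase_subset _ _)), hνT]
    exact hμ.crossingsWith_erase_modEq hcov he
  have hcovT : Disjoint ({e.1, e.2} : Finset (Fin N)) (cover T) := by
    simpa [cover] using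
      hμ.disjoint_cover (singleton_subset_iff.2 he) hT (disjoint_singleton_left.2 heT)
  have he12 := hμ.1 e he
  have hpos :
      posSum univ (cover (insert e T)) = e.1 + 1 + (e.2 + 1) + posSum univ (cover T) := by
    rw [posSum_univ, posSum_univ, cover_insert, sum_union hcovT, sum_pair he12.ne]
  have hsign : (-1 : R) ^ ((e.1 : ℕ) + 1 + (e.2 + 1)) * (-1) ^ crossingsWith e T =
      -(-1) ^ crossingsWith e ν := by
    rw [← mul_neg_one ((-1 : R) ^ _), ← pow_succ, ← pow_add]
    refine neg_one_pow_congr ?_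
    rw [Fin.card_Ioo] at hpar
    simp only [Nat.even_iff]
    unfold Nat.ModEq at hpar
    omega
  rw [splitWeight, splitWeight, hμeT, hμT, hpos, matchingWeight_insert A heν,
    matchingWeight_insert A heT, pow_add]
  linear_combination (-1) ^ posSum univ (cover T) * A e.1 e.2 * matchingWeight A ν *
    matchingWeight A T * hsign

def edgesWithin (B : Finset (Fin N)) (μ : Finset (Fin N × Fin N)) : Finset (Fin N × Fin N) :=
  {q ∈ μ | q.1 ∈ B ∧ q.2 ∈ B}

lemma subset_edgesWithin_iff {B : Finset (Fin N)} {μ T : Finset (Fin N × Fin N)} :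
    T ⊆ edgesWithin B μ ↔ T ⊆ μ ∧ cover T ⊆ B := by
  simp only [edgesWithin, cover, biUnion_subset, insert_subset_iff, singleton_subset_iff,
    subset_iff (s₁ := T), mem_filter]
  exact ⟨fun h => ⟨fun q hq => (h hq).1, fun q hq => (h hq).2⟩,
    fun h q hq => ⟨h.1 hq, h.2 q hq⟩⟩

lemma IsMatching.cover_sdiff {μ T : Finset (Fin N × Fin N)} (hμ : IsMatching μ) (hT : T ⊆ μ) :
    cover (μ \ T) = cover μ \ cover T := by
  rw [← sdiff_union_of_subset hT, cover_union, sdiff_union_of_subset hT,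
    union_sdiff_cancel_right (hμ.disjoint_cover sdiff_subset hT disjoint_sdiff_self_left)]

lemma IsMatching.edgesWithin_nonempty {μ : Finset (Fin N × Fin N)} (hμ : IsMatching μ)
    (hcov : cover μ = univ) {B : Finset (Fin N)} (hB : #Bᶜ < #B) :
    (edgesWithin B μ).Nonempty := by
  by_contra h
  rw [not_nonempty_iff_eq_empty, edgesWithin, filter_eq_empty_iff] at h
  refine hB.not_ge ?_
  rw [hμ.card_eq_sum_card_inter (hcov ▸ subset_univ B),
    hμ.card_eq_sum_card_inter (hcov ▸ subset_univ Bᶜ)]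
  refine sum_le_sum fun q hq => ?_
  have hne := (hμ.1 q hq).ne
  by_cases h1 : q.1 ∈ B <;> by_cases h2 : q.2 ∈ B
  · exact absurd ⟨h1, h2⟩ (h hq)
  all_goals simp [*, insert_inter_of_mem, insert_inter_of_notMem]

lemma IsMatching.sum_powerset_splitWeight_eq_zero (A : Matrix (Fin N) (Fin N) R)
    {μ S : Finset (Fin N × Fin N)} (hμ : IsMatching μ) (hcov : cover μ = univ) (hS : S ⊆ μ)
    (hne : S.Nonempty) : ∑ T ∈ S.powerset, splitWeight A μ T = 0 := by
  obtain ⟨e, he⟩ := hne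
  rw [← insert_erase he, sum_powerset_insert (notMem_erase e S), ← sum_add_distrib]
  refine sum_eq_zero fun T hT => ?_
  rw [mem_powerset] at hT
  rw [hμ.splitWeight_insert A hcov (hT.trans ((erase_subset e S).trans hS)) (hS he)
    fun h => notMem_erase e S (hT h), add_neg_cancel]

lemma sum_powerset_mpf_mul_mpf_eq_sum_splitWeight (A : Matrix (Fin N) (Fin N) R)
    (B : Finset (Fin N)) :
    ∑ X ∈ B.powerset, (-1 : R) ^ posSum univ (B \ X) * (mpf A (Bᶜ ∪ X) * mpf A (B \ X)) =
      ∑ μ ∈ perfectMatchings univ, ∑ T ∈ (edgesWithin B μ).powerset, splitWeight A μ T := by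
  simp_rw [mpf_eq_sum_matchingWeight, sum_mul_sum, ← sum_product', mul_sum]
  rw [sum_sigma', sum_sigma']
  have hdisj : ∀ X : Finset (Fin N), Disjoint (Bᶜ ∪ X) (B \ X) := fun X =>
    disjoint_union_left.2 ⟨disjoint_compl_left.mono_right sdiff_subset, disjoint_sdiff⟩
  refine sum_bij' (fun x _ => ⟨x.2.1 ∪ x.2.2, x.2.2⟩)
    (fun y _ => ⟨B \ cover y.2, (y.1 \ y.2, y.2)⟩) ?_ ?_ ?_ ?_ ?_
  · rintro ⟨X, μ₁, μ₂⟩ hx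
    simp only [mem_sigma, mem_product, mem_powerset, mem_perfectMatchings,
      subset_edgesWithin_iff] at hx ⊢
    obtain ⟨hX, ⟨hμ₁, hcov₁⟩, hμ₂, hcov₂⟩ := hx
    refine ⟨⟨hμ₁.union hμ₂ (hcov₁ ▸ hcov₂ ▸ hdisj X), ?_⟩, subset_union_right,
      hcov₂ ▸ sdiff_subset⟩
    rw [cover_union, hcov₁, hcov₂, union_assoc, union_sdiff_self_eq_union, union_eq_right.2 hX,
      union_comm, union_compl]
  · rintro ⟨μ, T⟩ hy
    simp only [mem_sigma, mem_product, mem_powerset, mem_perfectMatchings,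
      subset_edgesWithin_iff] at hy ⊢
    obtain ⟨⟨hμ, hcov⟩, hTμ, hTB⟩ := hy
    refine ⟨sdiff_subset, ⟨hμ.mono sdiff_subset, ?_⟩, hμ.mono hTμ,
      (Finset.sdiff_sdiff_eq_self hTB).symm⟩
    rw [hμ.cover_sdiff hTμ, hcov]
    ext v
    have := @hTB v
    simp only [mem_sdiff, mem_univ, true_and, mem_union, mem_compl]
    tauto
  · rintro ⟨X, μ₁, μ₂⟩ hx
    simp only [mem_sigma, mem_product, mem_powerset, mem_perfectMatchings] at hx
    obtain ⟨hX, ⟨-, hcov₁⟩, -, hcov₂⟩ := hx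
    simp only [hcov₂, Finset.sdiff_sdiff_eq_self hX,
      union_sdiff_cancel_right (disjoint_of_disjoint_cover (hcov₁ ▸ hcov₂ ▸ hdisj X))]
  · rintro ⟨μ, T⟩ hy
    simp only [mem_sigma, mem_powerset, subset_edgesWithin_iff] at hy
    simp only [sdiff_union_of_subset hy.2.1]
  · rintro ⟨X, μ₁, μ₂⟩ hx
    simp only [mem_sigma, mem_product, mem_powerset, mem_perfectMatchings] at hx
    obtain ⟨-, ⟨-, hcov₁⟩, -, hcov₂⟩ := hx
    rw [splitWeight,
      union_sdiff_cancel_right (disjoint_of_disjoint_cover (hcov₁ ▸ hcov₂ ▸ hdisj X)), hcov₂]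

theorem sum_powerset_mpf_mul_mpf_eq_zero (A : Matrix (Fin N) (Fin N) R) {B : Finset (Fin N)}
    (hB : #Bᶜ < #B) :
    ∑ X ∈ B.powerset, (-1 : R) ^ posSum univ (B \ X) * (mpf A (Bᶜ ∪ X) * mpf A (B \ X)) = 0 := by
  rw [sum_powerset_mpf_mul_mpf_eq_sum_splitWeight]
  refine sum_eq_zero fun μ hμ => ?_
  obtain ⟨hμ, hcov⟩ := mem_perfectMatchings.1 hμ
  exact hμ.sum_powerset_splitWeight_eq_zero A hcov (filter_subset _ _)
    (hμ.edgesWithin_nonempty hcov hB)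

end

theorem srinivasan_m_lt_n_general {N m n : ℕ} {R : Type*} [CommRing R]
    (A : Matrix (Fin N) (Fin N) R)
    (A₀ B : Finset (Fin N)) (hdisj : Disjoint A₀ B) (hunion : A₀ ∪ B = Finset.univ)
    (hm : A₀.card = m) (hn : B.card = n) (hmn : m < n) :
    mpf A Finset.univ =
      - ∑ X ∈ B.powerset.filter (fun X => X ≠ B),
          (-1 : R) ^ posSum Finset.univ (B \ X) * (mpf A (A₀ ∪ X) * mpf A (B \ X)) := by
  obtain rfl : A₀ = Bᶜ := eq_compl_iff_isCompl.2 ⟨hdisj, codisjoint_iff.2 hunion⟩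
  have hsum := sum_powerset_mpf_mul_mpf_eq_zero A (hm ▸ hn ▸ hmn : #Bᶜ < #B)
  rw [← add_sum_erase _ _ (mem_powerset_self B), Finset.sdiff_self, hunion, mpf_empty] at hsum
  rw [filter_ne', eq_neg_iff_add_eq_zero, ← hsum]
  simp [posSum]

/-- **Srinivasan's expansion, case `m < n`.** With `V = Fin (m+n)` ordered,
partitioned into disjoint `A₀` (size `m`) and `B` (size `n`), `m < n`, `m + n` even:
`Pf(V) = −∑_{X ⊊ B} (−1)^{Σ(B\X,V)} Pf(A₀ ∪ X) Pf(B \ X)`. -/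
theorem srinivasan_m_lt_n {N m n : ℕ} {R : Type*} [CommRing R]
    (A : Matrix (Fin N) (Fin N) R) (hA : ∀ i j, A i j = - A j i)
    (A₀ B : Finset (Fin N)) (hdisj : Disjoint A₀ B) (hunion : A₀ ∪ B = Finset.univ)
    (hm : A₀.card = m) (hn : B.card = n) (hmn : m < n) (heven : Even (m + n)) :
    mpf A Finset.univ =
      - ∑ X ∈ B.powerset.filter (fun X => X ≠ B),
          (-1 : R) ^ posSum Finset.univ (B \ X) * (mpf A (A₀ ∪ X) * mpf A (B \ X)) :=
  srinivasan_m_lt_n_general A A₀ B hdisj hunion hm hn hmn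
end

section
/- Let G be a graph with ordered vertex set V and edge weights ω, and suppose e_i = {r_i, b_i}, i = 1,...,k, are edges such that r_i and b_i are adjacent in the vertex order (no vertex strictly between them). Construct G′ by subdividing each e_i into a path (r_i, r_i′, b_i′, b_i) with new vertices r_i′ (immediately after r_i) and b_i′ (immediately before b_i), and new edges of weights ω({r_i,r_i′}) = ω(e_i), ω({r_i′,b_i′}) = ω({b_i′,b_i}) = 1. Then Pf(G′) = (−1)^{k + Σ(c,V)} · Pf(G), where c = {r₁,b₁,...,r_k,b_k} and Σ(c,V) is the sum of the positions of the elements of c in V. -/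
open Finset

section Cross
variable {m m' : ℕ}

lemma crossings_eq_of_adj {μ A : Finset (Fin m × Fin m)} (hsub : A ⊆ μ)
    (hadj : ∀ p ∈ μ, p ∉ A → p.2.val = p.1.val + 1) : crossings μ = crossings A := by
  unfold crossings
  congr 1
  ext pq
  simp only [mem_filter, mem_product]
  constructor
  · rintro ⟨⟨h1, h2⟩, hc⟩
    refine ⟨⟨?_, ?_⟩, hc⟩
    · by_contra hn
      have := hadj _ h1 hn
      have c1 : (pq.1.1).val < (pq.2.1).val := hc.1
      have c2 : (pq.2.1).val < (pq.1.2).val := hc.2.1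
      omega
    · by_contra hn
      have := hadj _ h2 hn
      have c2 : (pq.2.1).val < (pq.1.2).val := hc.2.1
      have c3 : (pq.1.2).val < (pq.2.2).val := hc.2.2
      omega
  · rintro ⟨⟨h1, h2⟩, hc⟩
    exact ⟨⟨hsub h1, hsub h2⟩, hc⟩

lemma crossings_image (f : Fin m → Fin m') (hf : ∀ a b : Fin m, a < b ↔ f a < f b)
    (A : Finset (Fin m × Fin m)) :
    crossings (A.image fun p => (f p.1, f p.2)) = crossings A := by
  have finj : Function.Injective f := by
    intro a b h
    by_contra hne
    rcases lt_or_gt_of_ne hne with h' | h'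
    · exact absurd h (ne_of_lt ((hf a b).mp h'))
    · exact absurd h.symm (ne_of_lt ((hf b a).mp h'))
  unfold crossings
  symm
  apply Finset.card_bij (fun pq _ => ((f pq.1.1, f pq.1.2), (f pq.2.1, f pq.2.2)))
  · rintro ⟨p, q⟩ hpq
    simp only [mem_filter, mem_product] at hpq ⊢
    obtain ⟨⟨h1, h2⟩, c1, c2, c3⟩ := hpq
    refine ⟨⟨mem_image_of_mem _ h1, mem_image_of_mem _ h2⟩, ?_, ?_, ?_⟩
    · exact (hf _ _).mp c1
    · exact (hf _ _).mp c2
    · exact (hf _ _).mp c3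
  · rintro ⟨p, q⟩ _ ⟨p', q'⟩ _ h
    simp only [Prod.mk.injEq] at h
    obtain ⟨⟨h1, h2⟩, h3, h4⟩ := h
    ext <;> simp_all [finj h1, finj h2, finj h3, finj h4]
  · rintro ⟨p', q'⟩ hpq
    simp only [mem_filter, mem_product, mem_image] at hpq
    obtain ⟨⟨⟨p, hp, hpe⟩, ⟨q, hq, hqe⟩⟩, c1, c2, c3⟩ := hpq
    refine ⟨(p, q), ?_, ?_⟩
    · simp only [mem_filter, mem_product]
      subst hpe hqe
      exact ⟨⟨hp, hq⟩, (hf _ _).mpr c1, (hf _ _).mpr c2, (hf _ _).mpr c3⟩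
    · subst hpe hqe
      rfl

end Cross

structure Geo (n k : ℕ) where
  rv : Fin k → Fin n
  bv : Fin k → Fin n
  emb : Fin n → Fin (n + 2 * k)
  rr : Fin k → Fin (n + 2 * k)
  bb : Fin k → Fin (n + 2 * k)
  hadj : ∀ i, (bv i).val = (rv i).val + 1
  hsep : ∀ i j, i < j → bv i < rv j
  hemb : ∀ v, (emb v).val = v.val + 2 * (Finset.univ.filter fun i => bv i ≤ v).card
  hrr : ∀ i, (rr i).val = (emb (rv i)).val + 1
  hbb : ∀ i, (bb i).val = (emb (rv i)).val + 2

namespace Geo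
variable (g : Geo n k)

lemma sepval : ∀ i j : Fin k, i ≠ j → (g.bv i).val < (g.rv j).val ∨ (g.bv j).val < (g.rv i).val := by
  intro i j hij
  rcases lt_or_gt_of_ne hij with h | h
  · exact Or.inl (g.hsep i j h)
  · exact Or.inr (g.hsep j i h)

lemma emb_mono : ∀ {u v : Fin n}, u ≤ v → (g.emb u).val ≤ (g.emb v).val := by
  intro u v huv
  have hc : ((Finset.univ.filter fun i => g.bv i ≤ u)).card ≤
      ((Finset.univ.filter fun i => g.bv i ≤ v)).card := by
    apply card_le_card
    intro i hi
    simp only [mem_filter, mem_univ, true_and] at hi ⊢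
    exact le_trans hi huv
  have := g.hemb u; have := g.hemb v
  have : u.val ≤ v.val := huv
  omega

lemma emb_strict : ∀ {u v : Fin n}, u < v → (g.emb u).val < (g.emb v).val := by
  intro u v huv
  have hc : ((Finset.univ.filter fun i => g.bv i ≤ u)).card ≤
      ((Finset.univ.filter fun i => g.bv i ≤ v)).card := by
    apply card_le_card
    intro i hi
    simp only [mem_filter, mem_univ, true_and] at hi ⊢
    exact le_trans hi (le_of_lt huv)
  have := g.hemb u; have := g.hemb v
  have : u.val < v.val := huv
  omega

lemma emb_inj : Function.Injective g.emb := by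
  intro u v h
  by_contra hne
  rcases lt_or_gt_of_ne hne with h' | h'
  · exact absurd (congrArg Fin.val h) (Nat.ne_of_lt (g.emb_strict h'))
  · exact absurd (congrArg Fin.val h) (Nat.ne_of_gt (g.emb_strict h'))

lemma emb_lt_iff {u v : Fin n} : g.emb u < g.emb v ↔ u < v := by
  constructor
  · intro h
    by_contra hle
    push_neg at hle
    have := g.emb_mono hle
    have : (g.emb u).val < (g.emb v).val := h
    omega
  · exact fun h => g.emb_strict h

lemma bv_inj : Function.Injective g.bv := by
  intro i j h
  by_contra hne
  rcases g.sepval i j hne with h' | h' <;>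
    (have hi := g.hadj i; have hj := g.hadj j; have := congrArg Fin.val h; omega)

lemma emb_bv (i : Fin k) : (g.emb (g.bv i)).val = (g.emb (g.rv i)).val + 3 := by
  have hset : (Finset.univ.filter fun j => g.bv j ≤ g.bv i) =
      insert i (Finset.univ.filter fun j => g.bv j ≤ g.rv i) := by
    ext j
    simp only [mem_filter, mem_univ, true_and, mem_insert]
    have hi := g.hadj i
    constructor
    · intro h
      rcases eq_or_ne j i with rfl | hne
      · exact Or.inl rfl
      · rcases g.sepval j i hne with h' | h'
        · right; exact Fin.le_def.mpr (by have := Fin.le_def.mp h; omega)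
        · have hj := g.hadj j
          have := Fin.le_def.mp h
          omega
    · intro h
      rcases h with rfl | h
      · exact le_refl _
      · have := Fin.le_def.mp h
        exact Fin.le_def.mpr (by omega)
  have hnotmem : i ∉ (Finset.univ.filter fun j => g.bv j ≤ g.rv i) := by
    simp only [mem_filter, mem_univ, true_and]
    intro h
    have := Fin.le_def.mp h
    have := g.hadj i
    omega
  have hcard : (Finset.univ.filter fun j => g.bv j ≤ g.bv i).card =
      (Finset.univ.filter fun j => g.bv j ≤ g.rv i).card + 1 := by
    rw [hset, card_insert_of_notMem hnotmem]
  have h1 := g.hemb (g.bv i)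
  have h2 := g.hemb (g.rv i)
  have h3 := g.hadj i
  omega

lemma gap (v : Fin n) (i : Fin k) :
    (g.emb v).val ≤ (g.emb (g.rv i)).val ∨ (g.emb (g.rv i)).val + 3 ≤ (g.emb v).val := by
  rcases le_or_gt v.val (g.rv i).val with h | h
  · exact Or.inl (g.emb_mono (Fin.le_def.mpr h))
  · right
    have : g.bv i ≤ v := Fin.le_def.mpr (by have := g.hadj i; omega)
    have := g.emb_mono this
    have := g.emb_bv i
    omega

lemma emb_ne_rr (v : Fin n) (i : Fin k) : g.emb v ≠ g.rr i := by
  apply Fin.val_ne_iff.mp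
  have := g.gap v i; have := g.hrr i; omega

lemma emb_ne_bb (v : Fin n) (i : Fin k) : g.emb v ≠ g.bb i := by
  apply Fin.val_ne_iff.mp
  have := g.gap v i; have := g.hbb i; omega

lemma block_sep {i j : Fin k} (h : i < j) : (g.bb i).val < (g.rr j).val := by
  have h1 := g.hsep i j h
  have := g.emb_strict h1
  have := g.emb_bv i
  have := g.hbb i; have := g.hrr j
  omega

lemma rr_inj : Function.Injective g.rr := by
  intro i j h
  by_contra hne
  have := congrArg Fin.val h
  have := g.hrr i; have := g.hrr j; have := g.hbb i; have := g.hbb j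
  rcases lt_or_gt_of_ne hne with h' | h' <;> (have := g.block_sep h'; omega)

lemma bb_inj : Function.Injective g.bb := by
  intro i j h
  by_contra hne
  have := congrArg Fin.val h
  have := g.hrr i; have := g.hrr j; have := g.hbb i; have := g.hbb j
  rcases lt_or_gt_of_ne hne with h' | h' <;> (have := g.block_sep h'; omega)

lemma rr_ne_bb (i j : Fin k) : g.rr i ≠ g.bb j := by
  apply Fin.val_ne_iff.mp
  have := g.hrr i; have := g.hbb j; have := g.hbb i; have := g.hrr j
  rcases lt_trichotomy i j with h | rfl | h
  · have := g.block_sep h; omega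
  · omega
  · have := g.block_sep h; omega

lemma rv_ne_bv (i j : Fin k) : g.rv i ≠ g.bv j := by
  apply Fin.val_ne_iff.mp
  have := g.hadj i; have := g.hadj j
  rcases lt_trichotomy i j with h | rfl | h
  · have := g.hsep i j h; have h' := Fin.lt_def.mp this; omega
  · omega
  · have := g.hsep j i h; have h' := Fin.lt_def.mp this; omega

lemma rv_inj : Function.Injective g.rv := by
  intro i j h
  by_contra hne
  have := congrArg Fin.val h
  have := g.hadj i; have := g.hadj j
  rcases g.sepval i j hne with h' | h' <;> omega

lemma rv_lt_bv (i : Fin k) : g.rv i < g.bv i :=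
  Fin.lt_def.mpr (by have := g.hadj i; omega)

lemma emb_rv_lt_rr (i : Fin k) : g.emb (g.rv i) < g.rr i :=
  Fin.lt_def.mpr (by have := g.hrr i; omega)

lemma rr_lt_bb (i : Fin k) : g.rr i < g.bb i :=
  Fin.lt_def.mpr (by have := g.hrr i; have := g.hbb i; omega)

lemma bb_lt_emb_bv (i : Fin k) : g.bb i < g.emb (g.bv i) :=
  Fin.lt_def.mpr (by have := g.hbb i; have := g.emb_bv i; omega)

lemma classify (x : Fin (n + 2 * k)) :
    (∃ v, x = g.emb v) ∨ (∃ i, x = g.rr i) ∨ (∃ i, x = g.bb i) := by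
  classical
  let f : Fin n ⊕ (Fin k ⊕ Fin k) → Fin (n + 2 * k) :=
    Sum.elim g.emb (Sum.elim g.rr g.bb)
  have hinj : Function.Injective f := by
    rintro (a | a | a) (b | b | b) h <;> simp only [f, Sum.elim_inl, Sum.elim_inr] at h
    · exact congrArg Sum.inl (g.emb_inj h)
    · exact absurd h (g.emb_ne_rr a b)
    · exact absurd h (g.emb_ne_bb a b)
    · exact absurd h.symm (g.emb_ne_rr b a)
    · exact congrArg (Sum.inr ∘ Sum.inl) (g.rr_inj h)
    · exact absurd h (g.rr_ne_bb a b)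
    · exact absurd h.symm (g.emb_ne_bb b a)
    · exact absurd h.symm (g.rr_ne_bb b a)
    · exact congrArg (Sum.inr ∘ Sum.inr) (g.bb_inj h)
  have hcard : Fintype.card (Fin n ⊕ (Fin k ⊕ Fin k)) = Fintype.card (Fin (n + 2 * k)) := by
    simp; omega
  have hbij := (Fintype.bijective_iff_injective_and_card f).mpr ⟨hinj, hcard⟩
  obtain ⟨a, ha⟩ := hbij.surjective x
  rcases a with v | i | i
  · exact Or.inl ⟨v, ha.symm⟩
  · exact Or.inr (Or.inl ⟨i, ha.symm⟩)
  · exact Or.inr (Or.inr ⟨i, ha.symm⟩)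


def E : Finset (Fin n × Fin n) := univ.image fun i => (g.rv i, g.bv i)

def S (μ : Finset (Fin n × Fin n)) : Finset (Fin k) :=
  univ.filter fun i => (g.rv i, g.bv i) ∈ μ

def Phi (μ : Finset (Fin n × Fin n)) : Finset (Fin (n + 2 * k) × Fin (n + 2 * k)) :=
  ((μ \ g.E).image fun p => (g.emb p.1, g.emb p.2)) ∪
  ((g.S μ).image fun i => (g.emb (g.rv i), g.rr i)) ∪
  ((g.S μ).image fun i => (g.bb i, g.emb (g.bv i))) ∪
  (((univ : Finset (Fin k)) \ g.S μ).image fun i => (g.rr i, g.bb i))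

def Psi (μ' : Finset (Fin (n + 2 * k) × Fin (n + 2 * k))) : Finset (Fin n × Fin n) :=
  (univ.filter fun p : Fin n × Fin n => (g.emb p.1, g.emb p.2) ∈ μ') ∪
  (univ.filter fun i => (g.emb (g.rv i), g.rr i) ∈ μ').image fun i => (g.rv i, g.bv i)

lemma mem_E {p : Fin n × Fin n} : p ∈ g.E ↔ ∃ i, p = (g.rv i, g.bv i) := by
  simp [E, eq_comm]

lemma mem_S {μ : Finset (Fin n × Fin n)} {i : Fin k} :
    i ∈ g.S μ ↔ (g.rv i, g.bv i) ∈ μ := by simp [S]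

lemma mem_Phi {μ : Finset (Fin n × Fin n)} {q : Fin (n + 2 * k) × Fin (n + 2 * k)} :
    q ∈ g.Phi μ ↔
      (∃ p, (p ∈ μ ∧ p ∉ g.E) ∧ q = (g.emb p.1, g.emb p.2)) ∨
      (∃ i, (g.rv i, g.bv i) ∈ μ ∧ q = (g.emb (g.rv i), g.rr i)) ∨
      (∃ i, (g.rv i, g.bv i) ∈ μ ∧ q = (g.bb i, g.emb (g.bv i))) ∨
      (∃ i, (g.rv i, g.bv i) ∉ μ ∧ q = (g.rr i, g.bb i)) := by
  simp only [Phi, mem_union, mem_image, mem_sdiff, mem_S, mem_univ, true_and, eq_comm, or_assoc]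

lemma mem_Psi {μ' : Finset (Fin (n + 2 * k) × Fin (n + 2 * k))} {p : Fin n × Fin n} :
    p ∈ g.Psi μ' ↔ (g.emb p.1, g.emb p.2) ∈ μ' ∨
      ∃ i, (g.emb (g.rv i), g.rr i) ∈ μ' ∧ p = (g.rv i, g.bv i) := by
  simp only [Psi, mem_union, mem_filter, mem_univ, true_and, mem_image, eq_comm]


lemma mem_cover {m : ℕ} {μ : Finset (Fin m × Fin m)} {v : Fin m} :
    v ∈ cover μ ↔ ∃ p ∈ μ, v = p.1 ∨ v = p.2 := by
  simp [cover, mem_biUnion, mem_insert, mem_singleton]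

lemma matching_disj {m : ℕ} {μ : Finset (Fin m × Fin m)} (h : IsMatching μ)
    {p q : Fin m × Fin m} (hp : p ∈ μ) (hq : q ∈ μ) (hne : p ≠ q) {x : Fin m}
    (hx1 : x = p.1 ∨ x = p.2) (hx2 : x = q.1 ∨ x = q.2) : False := by
  have h2 := h.2 p hp q hq hne
  have : x ∈ ({p.1, p.2} ∩ {q.1, q.2} : Finset (Fin m)) := by
    simp only [mem_inter, mem_insert, mem_singleton]
    exact ⟨hx1, hx2⟩
  rw [h2] at this
  exact absurd this (notMem_empty x)

lemma disj_of_ne {m : ℕ} {p q : Fin m × Fin m} (h1 : p.1 ≠ q.1) (h2 : p.1 ≠ q.2)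
    (h3 : p.2 ≠ q.1) (h4 : p.2 ≠ q.2) :
    ({p.1, p.2} ∩ {q.1, q.2} : Finset (Fin m)) = ∅ := by
  ext x
  simp only [mem_inter, mem_insert, mem_singleton, notMem_empty, iff_false, not_and]
  rintro (rfl | rfl) (h | h) <;> tauto

lemma mem_E_self (i : Fin k) : (g.rv i, g.bv i) ∈ g.E := g.mem_E.mpr ⟨i, rfl⟩

lemma phi_matching (μ : Finset (Fin n × Fin n)) (hμ : IsMatching μ) :
    IsMatching (g.Phi μ) := by
  constructor
  · intro p hp
    rcases g.mem_Phi.mp hp with ⟨q, ⟨hq, _⟩, rfl⟩ | ⟨i, _, rfl⟩ | ⟨i, _, rfl⟩ | ⟨i, _, rfl⟩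
    · exact g.emb_lt_iff.mpr (hμ.1 q hq)
    · exact g.emb_rv_lt_rr i
    · exact g.bb_lt_emb_bv i
    · exact g.rr_lt_bb i
  · intro p hp q hq hne
    rcases g.mem_Phi.mp hp with ⟨p', ⟨hp'm, hp'E⟩, rfl⟩ | ⟨i, hi, rfl⟩ | ⟨i, hi, rfl⟩ | ⟨i, hi, rfl⟩ <;>
      rcases g.mem_Phi.mp hq with ⟨q', ⟨hq'm, hq'E⟩, rfl⟩ | ⟨j, hj, rfl⟩ | ⟨j, hj, rfl⟩ | ⟨j, hj, rfl⟩
    -- O O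
    · have hne' : p' ≠ q' := fun h => hne (by rw [h])
      exact disj_of_ne
        (fun h => matching_disj hμ hp'm hq'm hne' (Or.inl rfl) (Or.inl (g.emb_inj h)))
        (fun h => matching_disj hμ hp'm hq'm hne' (Or.inl rfl) (Or.inr (g.emb_inj h)))
        (fun h => matching_disj hμ hp'm hq'm hne' (Or.inr rfl) (Or.inl (g.emb_inj h)))
        (fun h => matching_disj hμ hp'm hq'm hne' (Or.inr rfl) (Or.inr (g.emb_inj h)))
    -- O P1
    · have hne' : p' ≠ (g.rv j, g.bv j) := fun h => hp'E (h ▸ g.mem_E_self j)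
      exact disj_of_ne
        (fun h => matching_disj hμ hp'm hj hne' (Or.inl rfl) (Or.inl (g.emb_inj h)))
        (g.emb_ne_rr _ _)
        (fun h => matching_disj hμ hp'm hj hne' (Or.inr rfl) (Or.inl (g.emb_inj h)))
        (g.emb_ne_rr _ _)
    -- O P2
    · have hne' : p' ≠ (g.rv j, g.bv j) := fun h => hp'E (h ▸ g.mem_E_self j)
      exact disj_of_ne
        (g.emb_ne_bb _ _)
        (fun h => matching_disj hμ hp'm hj hne' (Or.inl rfl) (Or.inr (g.emb_inj h)))
        (g.emb_ne_bb _ _)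
        (fun h => matching_disj hμ hp'm hj hne' (Or.inr rfl) (Or.inr (g.emb_inj h)))
    -- O P3
    · exact disj_of_ne (g.emb_ne_rr _ _) (g.emb_ne_bb _ _) (g.emb_ne_rr _ _) (g.emb_ne_bb _ _)
    -- P1 O
    · have hne' : q' ≠ (g.rv i, g.bv i) := fun h => hq'E (h ▸ g.mem_E_self i)
      exact disj_of_ne
        (fun h => matching_disj hμ hq'm hi hne' (Or.inl rfl) (Or.inl (g.emb_inj h.symm)))
        (fun h => matching_disj hμ hq'm hi hne' (Or.inr rfl) (Or.inl (g.emb_inj h.symm)))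
        (fun h => (g.emb_ne_rr _ _) h.symm)
        (fun h => (g.emb_ne_rr _ _) h.symm)
    -- P1 P1
    · have hij : i ≠ j := fun h => hne (by rw [h])
      exact disj_of_ne
        (fun h => hij (g.rv_inj (g.emb_inj h)))
        (g.emb_ne_rr _ _)
        (fun h => (g.emb_ne_rr _ _) h.symm)
        (fun h => hij (g.rr_inj h))
    -- P1 P2
    · exact disj_of_ne
        (g.emb_ne_bb _ _)
        (fun h => g.rv_ne_bv i j (g.emb_inj h))
        (g.rr_ne_bb _ _)
        (fun h => (g.emb_ne_rr _ _) h.symm)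
    -- P1 P3
    · have hij : i ≠ j := by rintro rfl; exact hj hi
      exact disj_of_ne
        (g.emb_ne_rr _ _)
        (g.emb_ne_bb _ _)
        (fun h => hij (g.rr_inj h))
        (g.rr_ne_bb _ _)
    -- P2 O
    · have hne' : q' ≠ (g.rv i, g.bv i) := fun h => hq'E (h ▸ g.mem_E_self i)
      exact disj_of_ne
        (fun h => (g.emb_ne_bb _ _) h.symm)
        (fun h => (g.emb_ne_bb _ _) h.symm)
        (fun h => matching_disj hμ hq'm hi hne' (Or.inl rfl) (Or.inr (g.emb_inj h.symm)))
        (fun h => matching_disj hμ hq'm hi hne' (Or.inr rfl) (Or.inr (g.emb_inj h.symm)))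
    -- P2 P1
    · exact disj_of_ne
        (fun h => (g.emb_ne_bb _ _) h.symm)
        (fun h => (g.rr_ne_bb _ _) h.symm)
        (fun h => g.rv_ne_bv j i (g.emb_inj h.symm))
        (g.emb_ne_rr _ _)
    -- P2 P2
    · have hij : i ≠ j := fun h => hne (by rw [h])
      exact disj_of_ne
        (fun h => hij (g.bb_inj h))
        (fun h => (g.emb_ne_bb _ _) h.symm)
        (g.emb_ne_bb _ _)
        (fun h => hij (g.bv_inj (g.emb_inj h)))
    -- P2 P3
    · have hij : i ≠ j := by rintro rfl; exact hj hi
      exact disj_of_ne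
        (fun h => (g.rr_ne_bb _ _) h.symm)
        (fun h => hij (g.bb_inj h))
        (g.emb_ne_rr _ _)
        (g.emb_ne_bb _ _)
    -- P3 O
    · exact disj_of_ne
        (fun h => (g.emb_ne_rr _ _) h.symm)
        (fun h => (g.emb_ne_rr _ _) h.symm)
        (fun h => (g.emb_ne_bb _ _) h.symm)
        (fun h => (g.emb_ne_bb _ _) h.symm)
    -- P3 P1
    · have hij : i ≠ j := by rintro rfl; exact hi hj
      exact disj_of_ne
        (fun h => (g.emb_ne_rr _ _) h.symm)
        (fun h => hij (g.rr_inj h))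
        (fun h => (g.emb_ne_bb _ _) h.symm)
        (fun h => (g.rr_ne_bb _ _) h.symm)
    -- P3 P2
    · have hij : i ≠ j := by rintro rfl; exact hi hj
      exact disj_of_ne
        (fun h => (g.rr_ne_bb _ _) h)
        (fun h => (g.emb_ne_rr _ _) h.symm)
        (fun h => hij (g.bb_inj h))
        (fun h => (g.emb_ne_bb _ _) h.symm)
    -- P3 P3
    · have hij : i ≠ j := fun h => hne (by rw [h])
      exact disj_of_ne
        (fun h => hij (g.rr_inj h))
        (g.rr_ne_bb _ _)
        (fun h => (g.rr_ne_bb _ _) h.symm)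
        (fun h => hij (g.bb_inj h))

lemma phi_cover (μ : Finset (Fin n × Fin n)) (hc : cover μ = Finset.univ) :
    cover (g.Phi μ) = Finset.univ := by
  apply eq_univ_of_forall
  intro x
  rcases g.classify x with ⟨v, rfl⟩ | ⟨i, rfl⟩ | ⟨i, rfl⟩
  · have hv : v ∈ cover μ := hc ▸ mem_univ v
    rcases mem_cover.mp hv with ⟨p, hp, hvp⟩
    by_cases hpE : p ∈ g.E
    · rcases g.mem_E.mp hpE with ⟨i, rfl⟩
      rcases hvp with rfl | rfl
      · exact mem_cover.mpr ⟨(g.emb (g.rv i), g.rr i),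
          g.mem_Phi.mpr (Or.inr (Or.inl ⟨i, hp, rfl⟩)), Or.inl rfl⟩
      · exact mem_cover.mpr ⟨(g.bb i, g.emb (g.bv i)),
          g.mem_Phi.mpr (Or.inr (Or.inr (Or.inl ⟨i, hp, rfl⟩))), Or.inr rfl⟩
    · refine mem_cover.mpr ⟨(g.emb p.1, g.emb p.2),
        g.mem_Phi.mpr (Or.inl ⟨p, ⟨hp, hpE⟩, rfl⟩), ?_⟩
      rcases hvp with rfl | rfl
      · exact Or.inl rfl
      · exact Or.inr rfl
  · by_cases hi : (g.rv i, g.bv i) ∈ μ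
    · exact mem_cover.mpr ⟨(g.emb (g.rv i), g.rr i),
        g.mem_Phi.mpr (Or.inr (Or.inl ⟨i, hi, rfl⟩)), Or.inr rfl⟩
    · exact mem_cover.mpr ⟨(g.rr i, g.bb i),
        g.mem_Phi.mpr (Or.inr (Or.inr (Or.inr ⟨i, hi, rfl⟩))), Or.inl rfl⟩
  · by_cases hi : (g.rv i, g.bv i) ∈ μ
    · exact mem_cover.mpr ⟨(g.bb i, g.emb (g.bv i)),
        g.mem_Phi.mpr (Or.inr (Or.inr (Or.inl ⟨i, hi, rfl⟩))), Or.inl rfl⟩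
    · exact mem_cover.mpr ⟨(g.rr i, g.bb i),
        g.mem_Phi.mpr (Or.inr (Or.inr (Or.inr ⟨i, hi, rfl⟩))), Or.inr rfl⟩

lemma image_S (μ : Finset (Fin n × Fin n)) :
    (g.S μ).image (fun i => (g.rv i, g.bv i)) = μ ∩ g.E := by
  ext p
  simp only [mem_image, mem_inter, g.mem_S, g.mem_E]
  constructor
  · rintro ⟨i, hi, rfl⟩
    exact ⟨hi, ⟨i, rfl⟩⟩
  · rintro ⟨hp, ⟨i, rfl⟩⟩
    exact ⟨i, hp, rfl⟩

lemma psi_phi (μ : Finset (Fin n × Fin n)) :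
    g.Psi (g.Phi μ) = μ := by
  have hfilter : (univ.filter fun p : Fin n × Fin n => (g.emb p.1, g.emb p.2) ∈ g.Phi μ)
      = μ \ g.E := by
    ext p
    simp only [mem_filter, mem_univ, true_and, mem_sdiff]
    constructor
    · intro h
      rcases g.mem_Phi.mp h with ⟨q', hq', heq⟩ | ⟨i, _, heq⟩ | ⟨i, _, heq⟩ | ⟨i, _, heq⟩
      · simp only [Prod.mk.injEq] at heq
        have h1 : p.1 = q'.1 := g.emb_inj heq.1
        have h2 : p.2 = q'.2 := g.emb_inj heq.2
        have : p = q' := Prod.ext h1 h2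
        rw [this]; exact hq'
      · simp only [Prod.mk.injEq] at heq
        exact absurd heq.2 (g.emb_ne_rr _ _)
      · simp only [Prod.mk.injEq] at heq
        exact absurd heq.1 (g.emb_ne_bb _ _)
      · simp only [Prod.mk.injEq] at heq
        exact absurd heq.1 (g.emb_ne_rr _ _)
    · intro h
      exact g.mem_Phi.mpr (Or.inl ⟨p, h, rfl⟩)
  have hS : (univ.filter fun i => (g.emb (g.rv i), g.rr i) ∈ g.Phi μ) = g.S μ := by
    ext i
    simp only [mem_filter, mem_univ, true_and, g.mem_S]
    constructor
    · intro h
      rcases g.mem_Phi.mp h with ⟨q', _, heq⟩ | ⟨j, hj, heq⟩ | ⟨j, _, heq⟩ | ⟨j, _, heq⟩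
      · simp only [Prod.mk.injEq] at heq
        exact absurd heq.2.symm (g.emb_ne_rr _ _)
      · simp only [Prod.mk.injEq] at heq
        have : i = j := g.rr_inj heq.2
        rw [this]; exact hj
      · simp only [Prod.mk.injEq] at heq
        exact absurd heq.1 (g.emb_ne_bb _ _)
      · simp only [Prod.mk.injEq] at heq
        exact absurd heq.1 ((g.emb_ne_rr _ _))
    · intro h
      exact g.mem_Phi.mpr (Or.inr (Or.inl ⟨i, h, rfl⟩))
  unfold Psi
  rw [hfilter, hS, g.image_S]
  exact sdiff_union_inter μ g.E


lemma crossings_phi (μ : Finset (Fin n × Fin n)) : crossings (g.Phi μ) = crossings μ := by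
  have hsub : ((μ \ g.E).image fun p => (g.emb p.1, g.emb p.2)) ⊆ g.Phi μ := by
    intro q hq
    unfold Phi
    exact mem_union_left _ (mem_union_left _ (mem_union_left _ hq))
  have h1 : crossings (g.Phi μ) =
      crossings ((μ \ g.E).image fun p => (g.emb p.1, g.emb p.2)) := by
    apply crossings_eq_of_adj hsub
    intro p hp hnotA
    rcases g.mem_Phi.mp hp with ⟨p', hp', rfl⟩ | ⟨i, hi, rfl⟩ | ⟨i, hi, rfl⟩ | ⟨i, hi, rfl⟩
    · exact absurd (mem_image_of_mem _ (mem_sdiff.mpr hp')) hnotA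
    · exact g.hrr i
    · have := g.emb_bv i; have := g.hbb i; simpa using by omega
    · have := g.hrr i; have := g.hbb i; simpa using by omega
  rw [h1, crossings_image g.emb (fun a b => (g.emb_lt_iff (u := a) (v := b)).symm)]
  symm
  apply crossings_eq_of_adj (sdiff_subset)
  intro p hp hnp
  have hpE : p ∈ g.E := by
    by_contra h
    exact hnp (mem_sdiff.mpr ⟨hp, h⟩)
  rcases g.mem_E.mp hpE with ⟨i, rfl⟩
  exact g.hadj i

lemma prod_phi {R : Type*} [CommRing R]
    (A : Matrix (Fin n) (Fin n) R)
    (A' : Matrix (Fin (n + 2 * k)) (Fin (n + 2 * k)) R)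
    (hold : ∀ u v : Fin n,
      (∀ i, ¬(u = g.rv i ∧ v = g.bv i) ∧ ¬(u = g.bv i ∧ v = g.rv i)) →
      A' (g.emb u) (g.emb v) = A u v)
    (hnew₁ : ∀ i, A' (g.emb (g.rv i)) (g.rr i) = A (g.rv i) (g.bv i))
    (hnew₂ : ∀ i, A' (g.rr i) (g.bb i) = 1)
    (hnew₃ : ∀ i, A' (g.bb i) (g.emb (g.bv i)) = 1)
    (μ : Finset (Fin n × Fin n)) (hμ : IsMatching μ) :
    ∏ p ∈ g.Phi μ, A' p.1 p.2 = ∏ p ∈ μ, A p.1 p.2 := by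
  classical
  set O := ((μ \ g.E).image fun p => (g.emb p.1, g.emb p.2)) with hO
  set P1 := ((g.S μ).image fun i => (g.emb (g.rv i), g.rr i)) with hP1
  set P2 := ((g.S μ).image fun i => (g.bb i, g.emb (g.bv i))) with hP2
  set P3 := (((univ : Finset (Fin k)) \ g.S μ).image fun i => (g.rr i, g.bb i)) with hP3
  have hd1 : Disjoint O P1 := by
    rw [disjoint_left]
    rintro q hq hq'
    rw [hO, mem_image] at hq; rw [hP1, mem_image] at hq'
    obtain ⟨p, _, rfl⟩ := hq
    obtain ⟨i, _, heq⟩ := hq'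
    exact (g.emb_ne_rr p.2 i) (congrArg Prod.snd heq).symm
  have hd2 : Disjoint (O ∪ P1) P2 := by
    rw [disjoint_left]
    rintro q hq hq'
    rw [hP2, mem_image] at hq'
    obtain ⟨i, _, heq⟩ := hq'
    rcases mem_union.mp hq with h | h
    · rw [hO, mem_image] at h
      obtain ⟨p, _, rfl⟩ := h
      exact (g.emb_ne_bb p.1 i) (congrArg Prod.fst heq).symm
    · rw [hP1, mem_image] at h
      obtain ⟨j, _, rfl⟩ := h
      exact (g.emb_ne_bb (g.rv j) i) (congrArg Prod.fst heq).symm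
  have hd3 : Disjoint (O ∪ P1 ∪ P2) P3 := by
    rw [disjoint_left]
    rintro q hq hq'
    rw [hP3, mem_image] at hq'
    obtain ⟨i, _, heq⟩ := hq'
    rcases mem_union.mp hq with h | h
    · rcases mem_union.mp h with h' | h'
      · rw [hO, mem_image] at h'
        obtain ⟨p, _, rfl⟩ := h'
        exact (g.emb_ne_rr p.1 i) (congrArg Prod.fst heq).symm
      · rw [hP1, mem_image] at h'
        obtain ⟨j, _, rfl⟩ := h'
        exact (g.rr_ne_bb j i) (congrArg Prod.snd heq).symm
    · rw [hP2, mem_image] at h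
      obtain ⟨j, _, rfl⟩ := h
      exact (g.rr_ne_bb i j) (congrArg Prod.fst heq)
  have hPhi : g.Phi μ = O ∪ P1 ∪ P2 ∪ P3 := rfl
  rw [hPhi, prod_union hd3, prod_union hd2, prod_union hd1]
  have hprodO : ∏ p ∈ O, A' p.1 p.2 = ∏ p ∈ μ \ g.E, A p.1 p.2 := by
    rw [hO, prod_image]
    · apply prod_congr rfl
      intro p hp
      simp only [mem_sdiff] at hp
      apply hold
      intro i
      constructor
      · rintro ⟨h1, h2⟩
        exact hp.2 (g.mem_E.mpr ⟨i, Prod.ext h1 h2⟩)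
      · rintro ⟨h1, h2⟩
        have := hμ.1 p hp.1
        rw [h1, h2] at this
        exact absurd this (lt_asymm (g.rv_lt_bv i))
    · intro p _ q _ h
      simp only [Prod.mk.injEq] at h
      exact Prod.ext (g.emb_inj h.1) (g.emb_inj h.2)
  have hprodP1 : ∏ p ∈ P1, A' p.1 p.2 = ∏ i ∈ g.S μ, A (g.rv i) (g.bv i) := by
    rw [hP1, prod_image]
    · exact prod_congr rfl fun i _ => hnew₁ i
    · intro i _ j _ h
      simp only [Prod.mk.injEq] at h
      exact g.rr_inj h.2
  have hprodP2 : ∏ p ∈ P2, A' p.1 p.2 = 1 := by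
    rw [hP2, prod_image]
    · exact prod_eq_one fun i _ => hnew₃ i
    · intro i _ j _ h
      simp only [Prod.mk.injEq] at h
      exact g.bb_inj h.1
  have hprodP3 : ∏ p ∈ P3, A' p.1 p.2 = 1 := by
    rw [hP3, prod_image]
    · exact prod_eq_one fun i _ => hnew₂ i
    · intro i _ j _ h
      simp only [Prod.mk.injEq] at h
      exact g.rr_inj h.1
  rw [hprodO, hprodP1, hprodP2, hprodP3, mul_one, mul_one]
  have hsub : μ ∩ g.E ⊆ μ := inter_subset_left
  have := prod_sdiff (f := fun p : Fin n × Fin n => A p.1 p.2) hsub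
  rw [sdiff_inter_self_left] at this
  rw [← this]
  congr 1
  rw [← g.image_S μ, prod_image]
  intro i _ j _ h
  simp only [Prod.mk.injEq] at h
  exact g.rv_inj h.1

section Ctx
variable {R : Type*} [CommRing R] {A' : Matrix (Fin (n + 2 * k)) (Fin (n + 2 * k)) R}
  {μ' : Finset (Fin (n + 2 * k) × Fin (n + 2 * k))}

structure Ctx (g : Geo n k) (A' : Matrix (Fin (n + 2 * k)) (Fin (n + 2 * k)) R)
    (μ' : Finset (Fin (n + 2 * k) × Fin (n + 2 * k))) : Prop where
  hm : IsMatching μ'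
  hc : cover μ' = Finset.univ
  hnz : ∀ q ∈ μ', A' q.1 q.2 ≠ 0
  hA' : ∀ x y, A' x y = - A' y x
  hcut : ∀ i, A' (g.emb (g.rv i)) (g.emb (g.bv i)) = 0
  hrzero : ∀ i x, x ≠ g.emb (g.rv i) → x ≠ g.bb i → A' x (g.rr i) = 0
  hbzero : ∀ i x, x ≠ g.rr i → x ≠ g.emb (g.bv i) → A' x (g.bb i) = 0

variable {g : Geo n k}

lemma Ctx.cut_not (hx : Ctx g A' μ') (i : Fin k) : (g.emb (g.rv i), g.emb (g.bv i)) ∉ μ' :=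
  fun h => hx.hnz _ h (hx.hcut i)

lemma Ctx.rr_partner (hx : Ctx g A' μ') {i : Fin k} {q : Fin (n + 2 * k) × Fin (n + 2 * k)} (hq : q ∈ μ')
    (hv : g.rr i = q.1 ∨ g.rr i = q.2) :
    q = (g.emb (g.rv i), g.rr i) ∨ q = (g.rr i, g.bb i) := by
  have hnzq := hx.hnz q hq
  have hlt := hx.hm.1 q hq
  rcases hv with hv | hv
  · right
    have h2 : A' q.2 (g.rr i) ≠ 0 := by
      intro h
      apply hnzq
      rw [← hv, hx.hA' (g.rr i) q.2, h, neg_zero]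
    have : q.2 = g.emb (g.rv i) ∨ q.2 = g.bb i := by
      by_contra h
      push_neg at h
      exact h2 (hx.hrzero i q.2 h.1 h.2)
    rcases this with h | h
    · exfalso
      have h1 : g.rr i < q.2 := hv ▸ hlt
      rw [h] at h1
      exact absurd h1 (lt_asymm (g.emb_rv_lt_rr i))
    · exact Prod.ext hv.symm h
  · left
    have h2 : A' q.1 (g.rr i) ≠ 0 := by rw [hv]; exact hnzq
    have : q.1 = g.emb (g.rv i) ∨ q.1 = g.bb i := by
      by_contra h
      push_neg at h
      exact h2 (hx.hrzero i q.1 h.1 h.2)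
    rcases this with h | h
    · exact Prod.ext h hv.symm
    · exfalso
      have h1 : q.1 < g.rr i := hv ▸ hlt
      rw [h] at h1
      exact absurd h1 (lt_asymm (g.rr_lt_bb i))

lemma Ctx.bb_partner (hx : Ctx g A' μ') {i : Fin k} {q : Fin (n + 2 * k) × Fin (n + 2 * k)} (hq : q ∈ μ')
    (hv : g.bb i = q.1 ∨ g.bb i = q.2) :
    q = (g.bb i, g.emb (g.bv i)) ∨ q = (g.rr i, g.bb i) := by
  have hnzq := hx.hnz q hq
  have hlt := hx.hm.1 q hq
  rcases hv with hv | hv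
  · left
    have h2 : A' q.2 (g.bb i) ≠ 0 := by
      intro h
      apply hnzq
      rw [← hv, hx.hA' (g.bb i) q.2, h, neg_zero]
    have : q.2 = g.rr i ∨ q.2 = g.emb (g.bv i) := by
      by_contra h
      push_neg at h
      exact h2 (hx.hbzero i q.2 h.1 h.2)
    rcases this with h | h
    · exfalso
      have h1 : g.bb i < q.2 := hv ▸ hlt
      rw [h] at h1
      exact absurd h1 (lt_asymm (g.rr_lt_bb i))
    · exact Prod.ext hv.symm h
  · right
    have h2 : A' q.1 (g.bb i) ≠ 0 := by rw [hv]; exact hnzq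
    have : q.1 = g.rr i ∨ q.1 = g.emb (g.bv i) := by
      by_contra h
      push_neg at h
      exact h2 (hx.hbzero i q.1 h.1 h.2)
    rcases this with h | h
    · exact Prod.ext h hv.symm
    · exfalso
      have h1 : q.1 < g.bb i := hv ▸ hlt
      rw [h] at h1
      exact absurd h1 (lt_asymm (g.bb_lt_emb_bv i))

lemma Ctx.pair (hx : Ctx g A' μ') (i : Fin k) :
    ((g.emb (g.rv i), g.rr i) ∈ μ' ∧ (g.bb i, g.emb (g.bv i)) ∈ μ' ∧ (g.rr i, g.bb i) ∉ μ') ∨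
    ((g.emb (g.rv i), g.rr i) ∉ μ' ∧ (g.bb i, g.emb (g.bv i)) ∉ μ' ∧ (g.rr i, g.bb i) ∈ μ') := by
  have hrrcov : g.rr i ∈ cover μ' := hx.hc ▸ mem_univ _
  obtain ⟨q, hq, hv⟩ := mem_cover.mp hrrcov
  rcases hx.rr_partner hq hv with rfl | rfl
  · -- (emb rv i, rr i) ∈ μ'
    left
    have hbbcov : g.bb i ∈ cover μ' := hx.hc ▸ mem_univ _
    obtain ⟨q', hq', hv'⟩ := mem_cover.mp hbbcov
    rcases hx.bb_partner hq' hv' with rfl | rfl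
    · refine ⟨hq, hq', fun h3 => ?_⟩
      exact matching_disj hx.hm hq h3
        (p := (g.emb (g.rv i), g.rr i)) (q := (g.rr i, g.bb i))
        (fun he => (g.emb_ne_rr (g.rv i) i) (congrArg Prod.fst he))
        (x := g.rr i) (Or.inr rfl) (Or.inl rfl)
    · exfalso
      exact matching_disj hx.hm hq hq'
        (fun he => (g.emb_ne_rr (g.rv i) i) (congrArg Prod.fst he))
        (x := g.rr i) (Or.inr rfl) (Or.inl rfl)
  · -- (rr i, bb i) ∈ μ'
    right
    refine ⟨fun h1 => ?_, fun h2 => ?_, hq⟩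
    · exact matching_disj hx.hm h1 hq
        (fun he => (g.emb_ne_rr (g.rv i) i) (congrArg Prod.fst he))
        (x := g.rr i) (Or.inr rfl) (Or.inl rfl)
    · exact matching_disj hx.hm h2 hq
        (fun he => (g.rr_ne_bb i i) (congrArg Prod.fst he).symm)
        (x := g.bb i) (Or.inl rfl) (Or.inr rfl)

lemma Ctx.arc_cases (hx : Ctx g A' μ') {q : Fin (n + 2 * k) × Fin (n + 2 * k)} (hq : q ∈ μ') :
    (∃ u v : Fin n, q = (g.emb u, g.emb v) ∧ ∀ i, ¬(u = g.rv i ∧ v = g.bv i)) ∨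
    (∃ i, q = (g.emb (g.rv i), g.rr i)) ∨
    (∃ i, q = (g.bb i, g.emb (g.bv i))) ∨
    (∃ i, q = (g.rr i, g.bb i)) := by
  have hnzq := hx.hnz q hq
  have hlt := hx.hm.1 q hq
  rcases g.classify q.1 with ⟨u, hu⟩ | ⟨i, hi⟩ | ⟨i, hi⟩
  · rcases g.classify q.2 with ⟨v, hv⟩ | ⟨i, hi⟩ | ⟨i, hi⟩
    · left
      refine ⟨u, v, Prod.ext hu hv, fun i ⟨h1, h2⟩ => ?_⟩
      apply hnzq
      rw [hu, hv, h1, h2]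
      exact hx.hcut i
    · right; left
      refine ⟨i, ?_⟩
      have h2 : A' q.1 (g.rr i) ≠ 0 := by rw [← hi]; exact hnzq
      have : q.1 = g.emb (g.rv i) ∨ q.1 = g.bb i := by
        by_contra h
        push_neg at h
        exact h2 (hx.hrzero i q.1 h.1 h.2)
      rcases this with h | h
      · exact Prod.ext h hi
      · exact absurd (hu.symm.trans h) (g.emb_ne_bb u i)
    · -- q.2 = bb i, q.1 = emb u
      exfalso
      have h2 : A' q.1 (g.bb i) ≠ 0 := by rw [← hi]; exact hnzq
      have : q.1 = g.rr i ∨ q.1 = g.emb (g.bv i) := by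
        by_contra h
        push_neg at h
        exact h2 (hx.hbzero i q.1 h.1 h.2)
      rcases this with h | h
      · exact (g.emb_ne_rr u i) (hu ▸ h)
      · have : q.1 = g.emb (g.bv i) := h
        have hlt' : g.emb (g.bv i) < g.bb i := by
          rw [← this, ← hi]
          exact hlt
        exact absurd hlt' (lt_asymm (g.bb_lt_emb_bv i))
  · -- q.1 = rr i
    rcases hx.rr_partner hq (Or.inl hi.symm) with h | h
    · exfalso
      have : q.1 = g.emb (g.rv i) := by rw [h]
      exact (g.emb_ne_rr (g.rv i) i) (this ▸ hi ▸ rfl : g.emb (g.rv i) = g.rr i)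
    · exact Or.inr (Or.inr (Or.inr ⟨i, h⟩))
  · -- q.1 = bb i
    rcases hx.bb_partner hq (Or.inl hi.symm) with h | h
    · exact Or.inr (Or.inr (Or.inl ⟨i, h⟩))
    · exfalso
      have : q.1 = g.rr i := by rw [h]
      exact (g.rr_ne_bb i i) ((this ▸ hi : g.rr i = g.bb i))

lemma Ctx.mem_psi_E (hx : Ctx g A' μ') (i : Fin k) :
    (g.rv i, g.bv i) ∈ g.Psi μ' ↔ (g.emb (g.rv i), g.rr i) ∈ μ' := by
  rw [g.mem_Psi]
  constructor
  · rintro (h | ⟨j, hj, heq⟩)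
    · exact absurd h (hx.cut_not i)
    · simp only [Prod.mk.injEq] at heq
      rw [g.rv_inj heq.1]
      exact hj
  · intro h
    exact Or.inr ⟨i, h, rfl⟩

lemma Ctx.psi_matching (hx : Ctx g A' μ') : IsMatching (g.Psi μ') := by
  constructor
  · intro p hp
    rcases g.mem_Psi.mp hp with h | ⟨i, _, rfl⟩
    · exact g.emb_lt_iff.mp (hx.hm.1 _ h)
    · exact g.rv_lt_bv i
  · intro p hp q hq hne
    rw [eq_empty_iff_forall_notMem]
    intro x hxmem
    simp only [mem_inter, mem_insert, mem_singleton] at hxmem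
    obtain ⟨hx1, hx2⟩ := hxmem
    rcases g.mem_Psi.mp hp with h1 | ⟨i, hi, rfl⟩ <;>
      rcases g.mem_Psi.mp hq with h2 | ⟨j, hj, rfl⟩
    · -- both old
      have hne' : (g.emb p.1, g.emb p.2) ≠ (g.emb q.1, g.emb q.2) := by
        intro h
        simp only [Prod.mk.injEq] at h
        exact hne (Prod.ext (g.emb_inj h.1) (g.emb_inj h.2))
      refine matching_disj hx.hm h1 h2 hne' (x := g.emb x) ?_ ?_
      · rcases hx1 with rfl | rfl
        · exact Or.inl rfl
        · exact Or.inr rfl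
      · rcases hx2 with rfl | rfl
        · exact Or.inl rfl
        · exact Or.inr rfl
    · -- p old, q = (rv j, bv j)
      rcases hx2 with h | h
      · -- x = rv j
        refine matching_disj hx.hm h1 hj (x := g.emb x) ?_ ?_ ?_
        · intro he
          exact (g.emb_ne_rr p.2 j) (congrArg Prod.snd he)
        · rcases hx1 with rfl | rfl
          · exact Or.inl rfl
          · exact Or.inr rfl
        · exact Or.inl (by rw [h])
      · -- x = bv j
        have hbbj : (g.bb j, g.emb (g.bv j)) ∈ μ' := by
          rcases hx.pair j with ⟨_, hb, _⟩ | ⟨hnot, _, _⟩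
          · exact hb
          · exact absurd hj hnot
        refine matching_disj hx.hm h1 hbbj (x := g.emb x) ?_ ?_ ?_
        · intro he
          exact (g.emb_ne_bb p.1 j) (congrArg Prod.fst he)
        · rcases hx1 with rfl | rfl
          · exact Or.inl rfl
          · exact Or.inr rfl
        · exact Or.inr (by rw [h])
    · -- p = (rv i, bv i), q old
      rcases hx1 with h | h
      · refine matching_disj hx.hm h2 hi (x := g.emb x) ?_ ?_ ?_
        · intro he
          exact (g.emb_ne_rr q.2 i) (congrArg Prod.snd he)
        · rcases hx2 with rfl | rfl
          · exact Or.inl rfl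
          · exact Or.inr rfl
        · exact Or.inl (by rw [h])
      · have hbbi : (g.bb i, g.emb (g.bv i)) ∈ μ' := by
          rcases hx.pair i with ⟨_, hb, _⟩ | ⟨hnot, _, _⟩
          · exact hb
          · exact absurd hi hnot
        refine matching_disj hx.hm h2 hbbi (x := g.emb x) ?_ ?_ ?_
        · intro he
          exact (g.emb_ne_bb q.1 i) (congrArg Prod.fst he)
        · rcases hx2 with rfl | rfl
          · exact Or.inl rfl
          · exact Or.inr rfl
        · exact Or.inr (by rw [h])
    · -- both new
      have hij : i ≠ j := fun h => hne (by rw [h])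
      rcases hx1 with rfl | rfl <;> rcases hx2 with h | h
      · exact hij (g.rv_inj h)
      · exact (g.rv_ne_bv i j) h
      · exact (g.rv_ne_bv j i) h.symm
      · exact hij (g.bv_inj h)

lemma Ctx.psi_cover (hx : Ctx g A' μ') : cover (g.Psi μ') = Finset.univ := by
  apply eq_univ_of_forall
  intro v
  have hcov : g.emb v ∈ cover μ' := hx.hc ▸ mem_univ _
  obtain ⟨q, hq, hv⟩ := mem_cover.mp hcov
  rcases hx.arc_cases hq with ⟨u, w, rfl, _⟩ | ⟨i, rfl⟩ | ⟨i, rfl⟩ | ⟨i, rfl⟩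
  · have hmem : (u, w) ∈ g.Psi μ' := g.mem_Psi.mpr (Or.inl hq)
    rcases hv with h | h
    · exact mem_cover.mpr ⟨(u, w), hmem, Or.inl (g.emb_inj h)⟩
    · exact mem_cover.mpr ⟨(u, w), hmem, Or.inr (g.emb_inj h)⟩
  · rcases hv with h | h
    · have hmem : (g.rv i, g.bv i) ∈ g.Psi μ' := (hx.mem_psi_E i).mpr hq
      exact mem_cover.mpr ⟨(g.rv i, g.bv i), hmem, Or.inl (g.emb_inj h)⟩
    · exact absurd h (g.emb_ne_rr v i)
  · rcases hv with h | h
    · exact absurd h (g.emb_ne_bb v i)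
    · have hrri : (g.emb (g.rv i), g.rr i) ∈ μ' := by
        rcases hx.pair i with ⟨ha, _, _⟩ | ⟨_, hnot, _⟩
        · exact ha
        · exact absurd hq hnot
      have hmem : (g.rv i, g.bv i) ∈ g.Psi μ' := (hx.mem_psi_E i).mpr hrri
      exact mem_cover.mpr ⟨(g.rv i, g.bv i), hmem, Or.inr (g.emb_inj h)⟩
  · rcases hv with h | h
    · exact absurd h (g.emb_ne_rr v i)
    · exact absurd h (g.emb_ne_bb v i)

lemma Ctx.phi_psi (hx : Ctx g A' μ') : g.Phi (g.Psi μ') = μ' := by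
  apply Subset.antisymm
  · intro q hq
    rcases g.mem_Phi.mp hq with ⟨p, ⟨hpm, hpE⟩, rfl⟩ | ⟨i, hi, rfl⟩ | ⟨i, hi, rfl⟩ | ⟨i, hi, rfl⟩
    · rcases g.mem_Psi.mp hpm with h | ⟨j, _, rfl⟩
      · exact h
      · exact absurd (g.mem_E_self j) hpE
    · exact (hx.mem_psi_E i).mp hi
    · have hrri := (hx.mem_psi_E i).mp hi
      rcases hx.pair i with ⟨_, hb, _⟩ | ⟨hnot, _, _⟩
      · exact hb
      · exact absurd hrri hnot
    · rcases hx.pair i with ⟨ha, _, _⟩ | ⟨_, _, hc3⟩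
      · exact absurd ((hx.mem_psi_E i).mpr ha) hi
      · exact hc3
  · intro q hq
    rcases hx.arc_cases hq with ⟨u, w, rfl, hnotE⟩ | ⟨i, rfl⟩ | ⟨i, rfl⟩ | ⟨i, rfl⟩
    · apply g.mem_Phi.mpr
      refine Or.inl ⟨(u, w), ⟨g.mem_Psi.mpr (Or.inl hq), fun hE => ?_⟩, rfl⟩
      rcases g.mem_E.mp hE with ⟨i, heq⟩
      simp only [Prod.mk.injEq] at heq
      exact hnotE i ⟨heq.1, heq.2⟩
    · exact g.mem_Phi.mpr (Or.inr (Or.inl ⟨i, (hx.mem_psi_E i).mpr hq, rfl⟩))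
    · have hrri : (g.emb (g.rv i), g.rr i) ∈ μ' := by
        rcases hx.pair i with ⟨ha, _, _⟩ | ⟨_, hnot, _⟩
        · exact ha
        · exact absurd hq hnot
      exact g.mem_Phi.mpr (Or.inr (Or.inr (Or.inl ⟨i, (hx.mem_psi_E i).mpr hrri, rfl⟩)))
    · have hnot : (g.rv i, g.bv i) ∉ g.Psi μ' := by
        intro hmem
        have hrri := (hx.mem_psi_E i).mp hmem
        rcases hx.pair i with ⟨_, _, hc3⟩ | ⟨hnot', _, _⟩
        · exact hc3 hq
        · exact hnot' hrri
      exact g.mem_Phi.mpr (Or.inr (Or.inr (Or.inr ⟨i, hnot, rfl⟩)))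

end Ctx
end Geo

/-- **Pfaffian under edge subdivision.**  Let `G` be a weighted graph on the
ordered vertex set `Fin n` with skew-symmetric weight matrix `A`, and let
`e_i = {r_i, b_i}`, `i = 1,…,k`, be edges whose endpoints are adjacent in the
vertex order (`b_i = r_i + 1`).  Let `G′` (with weight matrix `A'` on
`Fin (n + 2k)`) be obtained by subdividing each `e_i` into a path
`(r_i, r_i′, b_i′, b_i)` with new vertices `r_i′` immediately after `r_i` and
`b_i′` immediately before `b_i`, new edge weights
`ω({r_i,r_i′}) = ω(e_i)`, `ω({r_i′,b_i′}) = ω({b_i′,b_i}) = 1`, and all other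
new entries zero.  Then `Pf(G′) = (−1)^{k + Σ(c,V)} · Pf(G)`, where
`c = {r₁,b₁,…,r_k,b_k}` and `Σ(c,V)` is the sum of the positions of the
elements of `c` in `V`. -/
theorem pfaffian_subdivision {n k : ℕ} {R : Type*} [CommRing R]
    (A : Matrix (Fin n) (Fin n) R) (hA : ∀ u v, A u v = - A v u)
    (rv bv : Fin k → Fin n)
    (hadjacent : ∀ i, (bv i).val = (rv i).val + 1)
    (hsep : ∀ i j, i < j → bv i < rv j)
    (A' : Matrix (Fin (n + 2 * k)) (Fin (n + 2 * k)) R)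
    (hA' : ∀ x y, A' x y = - A' y x)
    (ι : Fin n → Fin (n + 2 * k))
    (hι : ∀ v, (ι v).val = v.val + 2 * (Finset.univ.filter fun i => bv i ≤ v).card)
    (ρ β : Fin k → Fin (n + 2 * k))
    (hρ : ∀ i, (ρ i).val = (ι (rv i)).val + 1)
    (hβ : ∀ i, (β i).val = (ι (rv i)).val + 2)
    (hold : ∀ u v : Fin n,
      (∀ i, ¬(u = rv i ∧ v = bv i) ∧ ¬(u = bv i ∧ v = rv i)) →
      A' (ι u) (ι v) = A u v)
    (hcut : ∀ i, A' (ι (rv i)) (ι (bv i)) = 0)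
    (hnew₁ : ∀ i, A' (ι (rv i)) (ρ i) = A (rv i) (bv i))
    (hnew₂ : ∀ i, A' (ρ i) (β i) = 1)
    (hnew₃ : ∀ i, A' (β i) (ι (bv i)) = 1)
    (hρzero : ∀ i x, x ≠ ι (rv i) → x ≠ β i → A' x (ρ i) = 0)
    (hβzero : ∀ i x, x ≠ ρ i → x ≠ ι (bv i) → A' x (β i) = 0) :
    mpf A' Finset.univ =
      (-1 : R) ^ (k + ∑ i : Fin k, (((rv i).val + 1) + ((bv i).val + 1))) *
        mpf A Finset.univ := by
  classical
  let g : Geo n k := ⟨rv, bv, ι, ρ, β, hadjacent, hsep, hι, hρ, hβ⟩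
  -- the sign is +1
  have h1 : ∀ i : Fin k, ((rv i).val + 1) + ((bv i).val + 1) = 2 * (rv i).val + 3 := by
    intro i; have := hadjacent i; omega
  have h2 : k + ∑ i : Fin k, (((rv i).val + 1) + ((bv i).val + 1)) =
      2 * (2 * k + ∑ i : Fin k, (rv i).val) := by
    rw [Finset.sum_congr rfl fun i _ => h1 i, Finset.sum_add_distrib, Finset.sum_const,
      smul_eq_mul, card_univ, Fintype.card_fin, ← Finset.mul_sum]
    ring
  rw [h2, pow_mul]
  simp only [neg_one_sq, one_pow, one_mul]
  -- the bijection
  unfold mpf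
  symm
  refine Finset.sum_bij_ne_zero (fun μ _ _ => g.Phi μ) ?_ ?_ ?_ ?_
  · intro a h₁ _
    rw [mem_filter] at h₁ ⊢
    exact ⟨mem_univ _, g.phi_matching a h₁.2.1, g.phi_cover a h₁.2.2⟩
  · intro a₁ _ _ a₂ _ _ h
    have h' : g.Phi a₁ = g.Phi a₂ := h
    rw [← g.psi_phi a₁, ← g.psi_phi a₂, h']
  · intro b hb hb0
    rw [mem_filter] at hb
    have hnz : ∀ q ∈ b, A' q.1 q.2 ≠ 0 := by
      intro q hq h0
      exact hb0 (by rw [Finset.prod_eq_zero hq h0, mul_zero])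
    have hx : g.Ctx A' b := ⟨hb.2.1, hb.2.2, hnz, hA', hcut, hρzero, hβzero⟩
    have hmA := hx.psi_matching
    refine ⟨g.Psi b, mem_filter.mpr ⟨mem_univ _, hmA, hx.psi_cover⟩, ?_, hx.phi_psi⟩
    have hterm : ((-1 : R) ^ crossings (g.Psi b) * ∏ p ∈ g.Psi b, A p.1 p.2) =
        ((-1 : R) ^ crossings b * ∏ p ∈ b, A' p.1 p.2) := by
      conv_rhs => rw [← hx.phi_psi]
      rw [g.crossings_phi, g.prod_phi A A' hold hnew₁ hnew₂ hnew₃ _ hmA]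
    rw [hterm]
    exact hb0
  · intro a h₁ _
    rw [mem_filter] at h₁
    rw [g.crossings_phi, g.prod_phi A A' hold hnew₁ hnew₂ hnew₃ _ h₁.2.1]
end
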